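/- arXiv:2111.08589 — 3 statements merged into one kernel-verified Lean document; each statement's English description precedes it below -/
import Mathlib

section
/- Let k ≥ 3 and define g(ν) = (k-1)·ν/(1 - (1-ν)^{k-1}) + 1 - (k-1)·ν for ν ∈ (0, 1/(k-1)). Then g is strictly decreasing on this interval. -/
/-!
Since `1 - (1 - ν)^n = ν · ∑_{i<n} (1 - ν)^i`, writing `t = 1 - ν` and `n = k - 1` turns the
function into `1 + n · tⁿ / ∑_{i<n} tⁱ`. Comparing the two sums term by term,
`sⁿ tⁱ = s^(n-i) (s t)ⁱ < t^(n-i) (s t)ⁱ = tⁿ sⁱ` for `0 < s < t`, so `t ↦ tⁿ / ∑_{i<n} tⁱ` is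
strictly increasing on `t > 0`, and the function is strictly decreasing in `ν`.
-/

open Finset

variable {K : Type*} [Field K] [LinearOrder K] [IsStrictOrderedRing K]

lemma strictMonoOn_pow_div_geom_sum {n : ℕ} (hn : n ≠ 0) :
    StrictMonoOn (fun t : K => t ^ n / ∑ i ∈ range n, t ^ i) (Set.Ioi 0) := by
  intro s (hs : 0 < s) t (ht : 0 < t) hst
  rw [div_lt_div_iff₀ (geom_sum_pos hs.le hn) (geom_sum_pos ht.le hn), mul_sum, mul_sum]
  refine sum_lt_sum_of_nonempty (nonempty_range_iff.mpr hn) fun i hi => ?_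
  obtain ⟨j, rfl⟩ := Nat.exists_eq_add_of_lt (mem_range.mp hi)
  calc s ^ (i + j + 1) * t ^ i = s ^ (j + 1) * (s * t) ^ i := by ring
    _ < t ^ (j + 1) * (s * t) ^ i := by gcongr
    _ = t ^ (i + j + 1) * s ^ i := by ring

lemma mul_div_one_sub_one_sub_pow_add_one_sub_mul (n : ℕ) {ν : K} (hν : ν ≠ 0)
    (hS : ∑ i ∈ range n, (1 - ν) ^ i ≠ 0) :
    n * ν / (1 - (1 - ν) ^ n) + 1 - n * ν =
      1 + n * ((1 - ν) ^ n / ∑ i ∈ range n, (1 - ν) ^ i) := by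
  have hgeom : 1 - (1 - ν) ^ n = ν * ∑ i ∈ range n, (1 - ν) ^ i := by
    simpa [mul_comm] using (mul_neg_geom_sum (1 - ν) n).symm
  rw [hgeom]
  field_simp
  linear_combination (n : K) * hgeom

lemma strictAntiOn_mul_div_one_sub_one_sub_pow {n : ℕ} (hn : n ≠ 0) :
    StrictAntiOn (fun ν : K => n * ν / (1 - (1 - ν) ^ n) + 1 - n * ν) (Set.Ioo 0 1) := by
  intro a ⟨ha₀, ha₁⟩ b ⟨hb₀, hb₁⟩ hab
  have hS {ν : K} (hν : ν < 1) : ∑ i ∈ range n, (1 - ν) ^ i ≠ 0 :=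
    (geom_sum_pos (sub_pos.mpr hν).le hn).ne'
  dsimp only
  rw [mul_div_one_sub_one_sub_pow_add_one_sub_mul n ha₀.ne' (hS ha₁),
    mul_div_one_sub_one_sub_pow_add_one_sub_mul n hb₀.ne' (hS hb₁)]
  have hmono := strictMonoOn_pow_div_geom_sum (K := K) hn
    (show 0 < 1 - b by linarith) (show 0 < 1 - a by linarith) (by linarith)
  gcongr

theorem stmt_7_general (k : ℕ) :
    StrictAntiOn
      (fun ν : ℝ =>
        ((k : ℝ) - 1) * ν / (1 - (1 - ν) ^ (k - 1)) + 1 - ((k : ℝ) - 1) * ν)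
      (Set.Ioo 0 (1 / ((k : ℝ) - 1))) := by
  intro a ha b hb hab
  have hk : 2 ≤ k := by
    have : (1 : ℝ) < k := by linarith [one_div_pos.mp (ha.1.trans ha.2)]
    exact_mod_cast this
  have hcast : (k : ℝ) - 1 = ((k - 1 : ℕ) : ℝ) := by push_cast [hk.trans' one_le_two]; ring
  have hsub : Set.Ioo 0 (1 / ((k : ℝ) - 1)) ⊆ Set.Ioo 0 1 := by
    refine Set.Ioo_subset_Ioo_right (div_le_one_of_le₀ ?_ ?_) <;>
      rw [hcast] <;> norm_cast <;> omega
  rw [hcast]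
  exact strictAntiOn_mul_div_one_sub_one_sub_pow (by omega) (hsub ha) (hsub hb) hab

/-- The function `g(ν) = (k-1)ν/(1-(1-ν)^{k-1}) + 1 - (k-1)ν` is strictly
decreasing on `(0, 1/(k-1))` for `k ≥ 3`. -/
theorem stmt_7 (k : ℕ) (hk : 3 ≤ k) :
    StrictAntiOn
      (fun ν : ℝ =>
        ((k : ℝ) - 1) * ν / (1 - (1 - ν) ^ (k - 1)) + 1 - ((k : ℝ) - 1) * ν)
      (Set.Ioo 0 (1 / ((k : ℝ) - 1))) :=
  stmt_7_general k
end

section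
/- Let k ≥ 2 and ν_1, …, ν_k ∈ (0,1). Then (∑_{j=1}^k ν_j)/(1 - ∏_{j=1}^k (1-ν_j)) ≤ e/(e-1) whenever ∑_{j=1}^k ν_j ≤ 1. -/
open Finset

/-- Core inequality behind the `e/(e-1)` price of anarchy bounds:
if `ν_j ∈ (0,1)` and `∑ ν_j ≤ 1`, then
`(∑ ν_j)/(1 - ∏ (1-ν_j)) ≤ e/(e-1)`. -/
theorem stmt_11 (k : ℕ) (hk : 2 ≤ k) (ν : ℕ → ℝ)
    (hν : ∀ j ∈ Icc 1 k, ν j ∈ Set.Ioo (0 : ℝ) 1)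
    (hsum : ∑ j ∈ Icc 1 k, ν j ≤ 1) :
    (∑ j ∈ Icc 1 k, ν j) / (1 - ∏ j ∈ Icc 1 k, (1 - ν j)) ≤
      Real.exp 1 / (Real.exp 1 - 1) := by
  set S := ∑ j ∈ Icc 1 k, ν j with hS
  have hne : (Icc 1 k).Nonempty := ⟨1, by simp; omega⟩
  have hSpos : 0 < S :=
    Finset.sum_pos (fun j hj => (hν j hj).1) hne
  -- product bound: ∏ (1-ν j) ≤ exp (-S)
  have hprod : ∏ j ∈ Icc 1 k, (1 - ν j) ≤ Real.exp (-S) := by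
    have h1 : ∏ j ∈ Icc 1 k, (1 - ν j) ≤ ∏ j ∈ Icc 1 k, Real.exp (-ν j) := by
      apply Finset.prod_le_prod
      · intro j hj; linarith [(hν j hj).2]
      · intro j hj
        have := Real.add_one_le_exp (-ν j)
        linarith
    rw [← Real.exp_sum] at h1
    simpa [Finset.sum_neg_distrib, hS] using h1
  -- chord: exp(-S) ≤ (1-S) + S * exp(-1) for S ∈ [0,1]
  have hchord : Real.exp (-S) ≤ (1 - S) + S * Real.exp (-1) := by
    have hconv := convexOn_exp.2 (Set.mem_univ (0 : ℝ)) (Set.mem_univ (-1 : ℝ))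
      (by linarith : (0:ℝ) ≤ 1 - S) hSpos.le (by ring : (1 - S) + S = 1)
    simpa [mul_comm] using hconv
  have he1 : (0:ℝ) < Real.exp 1 - 1 := by
    have := Real.add_one_le_exp (1:ℝ)
    have h2 := Real.exp_pos 1
    nlinarith [Real.exp_one_gt_d9]
  have hexp : Real.exp (-1) * Real.exp 1 = 1 := by
    rw [← Real.exp_add]; norm_num
  have hden : S * (Real.exp 1 - 1) / Real.exp 1 ≤ 1 - ∏ j ∈ Icc 1 k, (1 - ν j) := by
    have h1 : 1 - ∏ j ∈ Icc 1 k, (1 - ν j) ≥ S - S * Real.exp (-1) := by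
      have := hprod.trans hchord; linarith
    have h2 : S * Real.exp (-1) = S / Real.exp 1 := by
      field_simp; nlinarith [Real.exp_pos 1]
    rw [div_le_iff₀ (Real.exp_pos 1)]
    nlinarith [Real.exp_pos 1]
  have hdenpos : 0 < 1 - ∏ j ∈ Icc 1 k, (1 - ν j) :=
    lt_of_lt_of_le (by positivity) hden
  rw [div_le_div_iff₀ hdenpos he1]
  rw [div_le_iff₀ (Real.exp_pos 1)] at hden
  nlinarith [Real.exp_pos 1]
end

section
/- Let k ≥ 2 and for ν ∈ (0,1) define h(ν) = ν·k/(1-(1-ν)^k). Then h is strictly increasing on (0,1) and lim_{ν→0⁺} h(ν) = 1. -/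
open Filter

noncomputable def gAux (k : ℕ) (ν : ℝ) : ℝ := ∑ i ∈ Finset.range k, (1 - ν) ^ i

lemma gAux_key (k : ℕ) (ν : ℝ) (hν : ν ≠ 0) :
    ν * (k : ℝ) / (1 - (1 - ν) ^ k) = (k : ℝ) / gAux k ν := by
  have h1 : 1 - (1 - ν) ^ k = ν * gAux k ν := by
    have h := geom_sum_mul (1 - ν) k
    unfold gAux
    linear_combination h
  rw [h1, mul_div_mul_left _ _ hν]

/-- For `k ≥ 2`, the function `h(ν) = kν/(1-(1-ν)^k)` is strictly increasing
on `(0,1)` and tends to `1` as `ν → 0⁺`. -/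
theorem stmt_19 (k : ℕ) (hk : 2 ≤ k) :
    StrictMonoOn (fun ν : ℝ => ν * (k : ℝ) / (1 - (1 - ν) ^ k))
      (Set.Ioo 0 1) ∧
    Tendsto (fun ν : ℝ => ν * (k : ℝ) / (1 - (1 - ν) ^ k))
      (nhdsWithin 0 (Set.Ioi 0)) (nhds 1) := by
  have hkpos : (0 : ℝ) < (k : ℝ) := by exact_mod_cast (by omega : 0 < k)
  have gpos : ∀ ν ∈ Set.Ioo (0:ℝ) 1, 0 < gAux k ν := by
    intro ν hν
    apply Finset.sum_pos
    · intro i _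
      exact pow_pos (by linarith [hν.2]) i
    · exact Finset.nonempty_range_iff.mpr (by omega)
  have ganti : ∀ a ∈ Set.Ioo (0:ℝ) 1, ∀ b ∈ Set.Ioo (0:ℝ) 1, a < b →
      gAux k b < gAux k a := by
    intro a ha b hb hab
    apply Finset.sum_lt_sum
    · intro i _
      exact pow_le_pow_left₀ (by linarith [hb.2]) (by linarith) i
    · refine ⟨1, Finset.mem_range.mpr (by omega), ?_⟩
      simpa using (by linarith : 1 - b < 1 - a)
  constructor
  · intro a ha b hb hab
    simp only
    rw [gAux_key k a (ne_of_gt ha.1), gAux_key k b (ne_of_gt hb.1)]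
    exact div_lt_div_of_pos_left hkpos (gpos b hb) (ganti a ha b hb hab)
  · have hgc : Continuous (gAux k) :=
      continuous_finset_sum _ fun i _ => (continuous_const.sub continuous_id).pow i
    have hg0 : gAux k 0 = (k : ℝ) := by simp [gAux]
    have hT : Tendsto (fun ν => (k : ℝ) / gAux k ν) (nhdsWithin 0 (Set.Ioi 0)) (nhds 1) := by
      have : ContinuousAt (fun ν => (k : ℝ) / gAux k ν) 0 :=
        continuousAt_const.div hgc.continuousAt (by rw [hg0]; exact ne_of_gt hkpos)
      have := this.tendsto.mono_left (nhdsWithin_le_nhds (s := Set.Ioi 0))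
      rwa [hg0, div_self (ne_of_gt hkpos)] at this
    refine hT.congr' ?_
    filter_upwards [self_mem_nhdsWithin] with ν hν
    exact (gAux_key k ν (ne_of_gt hν)).symm
end
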